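/- arXiv:2304.13248 — 2 statements merged into one kernel-verified Lean document; each statement's English description precedes it below -/
import Mathlib

section
/- With P, U, H = P X P⁻¹, K = U X U⁻¹, and polynomial sequences {p_k}, {u_k} as above, the connection formulas p_m(t) = ∑_{k=0}^{m} (p_m(K))_{0,k} u_k(t) and u_m(t) = ∑_{k=0}^{m} (u_m(H))_{0,k} p_k(t) hold, and consequently the connection coefficient matrices are mutually inverse: ∑_{k} (p_m(K))_{0,k} (u_k(H))_{0,n} = δ_{m,n} for all m, n ∈ ℕ. -/
open scoped BigOperators

/-- Product of infinite matrices; the sum is a `tsum`, which reduces to a finite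
sum for the banded matrices considered here. -/
noncomputable def matMul (A B : ℕ → ℕ → ℂ) : ℕ → ℕ → ℂ :=
  fun i k => ∑' j, A i j * B j k

noncomputable def matPow (A : ℕ → ℕ → ℂ) : ℕ → ℕ → ℕ → ℂ
  | 0 => fun i k => if i = k then 1 else 0
  | n + 1 => matMul (matPow A n) A

/-- Substitution of a matrix into a polynomial. -/
noncomputable def matPolyEval (w : Polynomial ℂ) (A : ℕ → ℕ → ℂ) : ℕ → ℕ → ℂ :=
  fun i k => ∑ m ∈ Finset.range (w.natDegree + 1), w.coeff m * matPow A m i k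

/-- The shift matrix `X`, with `X_{j,j+1} = 1`. -/
def Xmat : ℕ → ℕ → ℂ := fun i k => if k = i + 1 then 1 else 0

/-- The transpose `X̂` of the shift matrix. -/
def XhatMat : ℕ → ℕ → ℂ := fun i k => if i = k + 1 then 1 else 0

/-- The identity matrix. -/
def Imat : ℕ → ℕ → ℂ := fun i k => if i = k then 1 else 0

/-- The polynomial given by row `k` of a lower triangular matrix. -/
noncomputable def rowPoly (M : ℕ → ℕ → ℂ) (k : ℕ) : Polynomial ℂ :=
  ∑ j ∈ Finset.range (k + 1), Polynomial.C (M k j) * Polynomial.X ^ j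

/-!
Writing `p_m = ∑ⱼ P_{m,j} tʲ` and `tʲ = ∑ₖ U⁻¹_{j,k} u_k` (the rows of `U⁻¹ U = I`) gives
`p_m = ∑ₖ (P U⁻¹)_{m,k} u_k`. Row `0` of `Kʲ` is row `j` of `U⁻¹`, by induction:
`eⱼ U⁻¹ K = eⱼ X U⁻¹ = eⱼ₊₁ U⁻¹`. Hence `(p_m(K))_{0,k} = (P U⁻¹)_{m,k}`, and symmetrically for
`u_m(H)`. Substituting one connection formula into the other expresses `p_m` in the basis `{p_n}`,
and comparing coefficients shows that the two coefficient matrices are mutually inverse.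
-/

open Finset Polynomial

def IsLowerTriangular (M : ℕ → ℕ → ℂ) : Prop := ∀ k j : ℕ, j > k → M k j = 0

section RowPoly

variable {M : ℕ → ℕ → ℂ}

lemma coeff_rowPoly (hM : IsLowerTriangular M) (k j : ℕ) : (rowPoly M k).coeff j = M k j := by
  simp only [rowPoly, finsetSum_coeff, coeff_C_mul, coeff_X_pow, mul_ite, mul_one, mul_zero,
    sum_ite_eq, mem_range]
  split_ifs with hj
  · rfl
  · exact (hM k j (by omega)).symm

lemma degree_rowPoly (hM : IsLowerTriangular M) (hdiag : ∀ k, M k k = 1) (m : ℕ) :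
    (rowPoly M m).degree = m := by
  refine degree_eq_of_le_of_coeff_ne_zero ?_ (by simp [coeff_rowPoly hM, hdiag])
  rw [degree_le_iff_coeff_zero]
  intro j hj
  exact (coeff_rowPoly hM m j).trans (hM m j (by exact_mod_cast hj))

lemma natDegree_rowPoly (hM : IsLowerTriangular M) (hdiag : ∀ k, M k k = 1) (m : ℕ) :
    (rowPoly M m).natDegree = m :=
  natDegree_eq_of_degree_eq_some (degree_rowPoly hM hdiag m)

lemma linearIndependent_rowPoly (hM : IsLowerTriangular M) (hdiag : ∀ k, M k k = 1) :
    LinearIndependent ℂ (rowPoly M) :=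
  (⟨rowPoly M, degree_rowPoly hM hdiag⟩ : Polynomial.Sequence ℂ).linearIndependent

end RowPoly

lemma matMul_Xmat_zero (B : ℕ → ℕ → ℂ) (l : ℕ) : matMul B Xmat l 0 = 0 := by
  simp [matMul, Xmat]

lemma matMul_Xmat_succ (B : ℕ → ℕ → ℂ) (l i : ℕ) : matMul B Xmat l (i + 1) = B l i := by
  rw [matMul, tsum_eq_single i fun b hb => by simp [Xmat, hb.symm]]
  simp [Xmat]

section UnitLowerTriangular

variable {B Binv : ℕ → ℕ → ℂ}

lemma sum_range_mul_eq_Imat (hBinv : IsLowerTriangular Binv) (hB : matMul Binv B = Imat)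
    {j N : ℕ} (hj : j < N) (i : ℕ) : ∑ l ∈ range N, Binv j l * B l i = Imat j i := by
  rw [← congrFun (congrFun hB j) i, matMul]
  exact (tsum_eq_sum fun l hl => by rw [hBinv j l (by simp at hl; omega), zero_mul]).symm

lemma inv_diag_eq_one (hBlt : IsLowerTriangular B) (hBdiag : ∀ k, B k k = 1)
    (hBinv : IsLowerTriangular Binv) (hB : matMul Binv B = Imat) (k : ℕ) : Binv k k = 1 := by
  have h := sum_range_mul_eq_Imat hBinv hB (Nat.lt_succ_self k) k
  rwa [sum_range_succ, sum_eq_zero fun l hl => by rw [hBlt l k (by simp at hl; omega), mul_zero],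
    zero_add, hBdiag, mul_one, Imat, if_pos rfl] at h

lemma X_pow_eq_sum_rowPoly (hBlt : IsLowerTriangular B) (hBinv : IsLowerTriangular Binv)
    (hB : matMul Binv B = Imat) {j N : ℕ} (hj : j < N) :
    (X ^ j : ℂ[X]) = ∑ k ∈ range N, C (Binv j k) * rowPoly B k := by
  ext i
  simp only [finsetSum_coeff, coeff_C_mul, coeff_rowPoly hBlt, coeff_X_pow,
    sum_range_mul_eq_Imat hBinv hB hj, Imat, eq_comm]

lemma conj_Xmat_apply (hBlt : IsLowerTriangular B) {l N : ℕ} (hl : l < N) (k : ℕ) :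
    matMul (matMul B Xmat) Binv l k = ∑ i ∈ range N, B l i * Binv (i + 1) k := by
  rw [matMul, tsum_eq_sum (s := range (N + 1)), sum_range_succ', matMul_Xmat_zero, zero_mul,
    add_zero]
  · simp only [matMul_Xmat_succ]
  · intro n hn
    obtain ⟨i, rfl⟩ : ∃ i, n = i + 1 := ⟨n - 1, by simp at hn; omega⟩
    rw [matMul_Xmat_succ, hBlt l i (by simp at hn; omega), zero_mul]

lemma matPow_conj_Xmat_zero (hBlt : IsLowerTriangular B) (hBdiag : ∀ k, B k k = 1)
    (hBinv : IsLowerTriangular Binv) (hB : matMul Binv B = Imat) (j k : ℕ) :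
    matPow (matMul (matMul B Xmat) Binv) j 0 k = Binv j k := by
  induction j generalizing k with
  | zero =>
    change (if 0 = k then (1 : ℂ) else 0) = _
    split_ifs with hk
    · rw [← hk, inv_diag_eq_one hBlt hBdiag hBinv hB]
    · exact (hBinv 0 k (by omega)).symm
  | succ j ih =>
    have hrow : ∀ l ∈ range (j + 1), Binv j l * matMul (matMul B Xmat) Binv l k =
        ∑ i ∈ range (j + 1), Binv j l * B l i * Binv (i + 1) k := fun l hl => by
      rw [conj_Xmat_apply hBlt (mem_range.mp hl), mul_sum]
      simp only [mul_assoc]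
    calc matPow (matMul (matMul B Xmat) Binv) (j + 1) 0 k
        = ∑ l ∈ range (j + 1), Binv j l * matMul (matMul B Xmat) Binv l k := by
          simp only [matPow, matMul, ih]
          exact tsum_eq_sum fun l hl => by rw [hBinv j l (by simp at hl; omega), zero_mul]
      _ = ∑ i ∈ range (j + 1), Imat j i * Binv (i + 1) k := by
          rw [sum_congr rfl hrow, sum_comm]
          simp only [← sum_mul, sum_range_mul_eq_Imat hBinv hB (Nat.lt_succ_self j)]
      _ = Binv (j + 1) k := by simp [Imat]

lemma matPolyEval_rowPoly_conj_Xmat {A : ℕ → ℕ → ℂ} (hA : IsLowerTriangular A)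
    (hAdiag : ∀ k, A k k = 1) (hBlt : IsLowerTriangular B) (hBdiag : ∀ k, B k k = 1)
    (hBinv : IsLowerTriangular Binv) (hB : matMul Binv B = Imat) (m k : ℕ) :
    matPolyEval (rowPoly A m) (matMul (matMul B Xmat) Binv) 0 k =
      ∑ j ∈ range (m + 1), A m j * Binv j k := by
  simp only [matPolyEval, natDegree_rowPoly hA hAdiag, coeff_rowPoly hA,
    matPow_conj_Xmat_zero hBlt hBdiag hBinv hB]

lemma rowPoly_eq_sum_matPolyEval {A : ℕ → ℕ → ℂ} (hA : IsLowerTriangular A)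
    (hAdiag : ∀ k, A k k = 1) (hBlt : IsLowerTriangular B) (hBdiag : ∀ k, B k k = 1)
    (hBinv : IsLowerTriangular Binv) (hB : matMul Binv B = Imat) {m N : ℕ} (hm : m < N) :
    rowPoly A m = ∑ k ∈ range N,
      C (matPolyEval (rowPoly A m) (matMul (matMul B Xmat) Binv) 0 k) * rowPoly B k := by
  simp only [matPolyEval_rowPoly_conj_Xmat hA hAdiag hBlt hBdiag hBinv hB, map_sum, map_mul,
    sum_mul]
  rw [sum_comm, rowPoly]
  refine sum_congr rfl fun j hj => ?_
  rw [X_pow_eq_sum_rowPoly hBlt hBinv hB (lt_of_le_of_lt (by simpa using hj) hm), mul_sum]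
  simp only [mul_assoc]

end UnitLowerTriangular

lemma sum_mul_eq_ite_of_linearIndependent {R V : Type*} [CommRing R] [AddCommGroup V]
    [Module R V] {q r : ℕ → V} (hq : LinearIndependent R q) {a b : ℕ → ℕ → R} {m n N : ℕ}
    (hm : m < N) (hn : n < N) (ha : q m = ∑ k ∈ range N, a m k • r k)
    (hb : ∀ k < N, r k = ∑ j ∈ range N, b k j • q j) :
    ∑ k ∈ range N, a m k * b k n = if m = n then 1 else 0 := by
  have hsum : ∑ j ∈ range N, ((∑ k ∈ range N, a m k * b k j) - if m = j then 1 else 0) • q j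
      = 0 := by
    simp only [sub_smul, sum_sub_distrib, ite_smul, one_smul, zero_smul, sum_ite_eq,
      mem_range, if_pos hm, sum_smul, mul_smul]
    rw [sum_comm, sub_eq_zero, ha]
    exact sum_congr rfl fun k hk => by rw [hb k (mem_range.mp hk), smul_sum]
  exact sub_eq_zero.mp (linearIndependent_iff'.mp hq _ _ hsum n (mem_range.mpr hn))

theorem stmt18_general (P U Pinv Uinv : ℕ → ℕ → ℂ)
    (hPlt : ∀ k j : ℕ, j > k → P k j = 0) (hPdiag : ∀ k, P k k = 1)
    (hUlt : ∀ k j : ℕ, j > k → U k j = 0) (hUdiag : ∀ k, U k k = 1)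
    (hPinvLt : ∀ k j : ℕ, j > k → Pinv k j = 0)
    (hUinvLt : ∀ k j : ℕ, j > k → Uinv k j = 0)
    (hP2 : matMul Pinv P = Imat)
    (hU2 : matMul Uinv U = Imat) :
    let H := matMul (matMul P Xmat) Pinv
    let K := matMul (matMul U Xmat) Uinv
    (∀ m : ℕ, rowPoly P m =
      ∑ k ∈ Finset.range (m + 1),
        Polynomial.C (matPolyEval (rowPoly P m) K 0 k) * rowPoly U k) ∧
    (∀ m : ℕ, rowPoly U m =
      ∑ k ∈ Finset.range (m + 1),
        Polynomial.C (matPolyEval (rowPoly U m) H 0 k) * rowPoly P k) ∧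
    (∀ m n : ℕ,
      ∑ k ∈ Finset.range (m + n + 1),
        matPolyEval (rowPoly P m) K 0 k * matPolyEval (rowPoly U k) H 0 n =
      if m = n then 1 else 0) := by
  intro H K
  have hPU {m N : ℕ} (hm : m < N) : rowPoly P m = ∑ k ∈ range N,
      matPolyEval (rowPoly P m) K 0 k • rowPoly U k := by
    simpa only [C_mul'] using rowPoly_eq_sum_matPolyEval hPlt hPdiag hUlt hUdiag hUinvLt hU2 hm
  have hUP {m N : ℕ} (hm : m < N) : rowPoly U m = ∑ k ∈ range N,
      matPolyEval (rowPoly U m) H 0 k • rowPoly P k := by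
    simpa only [C_mul'] using rowPoly_eq_sum_matPolyEval hUlt hUdiag hPlt hPdiag hPinvLt hP2 hm
  refine ⟨fun m => ?_, fun m => ?_, fun m n => ?_⟩
  · simpa only [C_mul'] using hPU m.lt_succ_self
  · simpa only [C_mul'] using hUP m.lt_succ_self
  · exact sum_mul_eq_ite_of_linearIndependent (linearIndependent_rowPoly hPlt hPdiag)
      (a := fun m k => matPolyEval (rowPoly P m) K 0 k)
      (b := fun k j => matPolyEval (rowPoly U k) H 0 j) (N := m + n + 1)
      (by omega) (by omega) (hPU (by omega)) fun k hk => hUP hk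

theorem stmt18 (P U Pinv Uinv : ℕ → ℕ → ℂ)
    (hPlt : ∀ k j : ℕ, j > k → P k j = 0) (hPdiag : ∀ k, P k k = 1)
    (hUlt : ∀ k j : ℕ, j > k → U k j = 0) (hUdiag : ∀ k, U k k = 1)
    (hPinvLt : ∀ k j : ℕ, j > k → Pinv k j = 0)
    (hUinvLt : ∀ k j : ℕ, j > k → Uinv k j = 0)
    (hP1 : matMul P Pinv = Imat) (hP2 : matMul Pinv P = Imat)
    (hU1 : matMul U Uinv = Imat) (hU2 : matMul Uinv U = Imat) :
    let H := matMul (matMul P Xmat) Pinv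
    let K := matMul (matMul U Xmat) Uinv
    (∀ m : ℕ, rowPoly P m =
      ∑ k ∈ Finset.range (m + 1),
        Polynomial.C (matPolyEval (rowPoly P m) K 0 k) * rowPoly U k) ∧
    (∀ m : ℕ, rowPoly U m =
      ∑ k ∈ Finset.range (m + 1),
        Polynomial.C (matPolyEval (rowPoly U m) H 0 k) * rowPoly P k) ∧
    (∀ m n : ℕ,
      ∑ k ∈ Finset.range (m + n + 1),
        matPolyEval (rowPoly P m) K 0 k * matPolyEval (rowPoly U k) H 0 n =
      if m = n then 1 else 0) :=
  stmt18_general P U Pinv Uinv hPlt hPdiag hUlt hUdiag hPinvLt hUinvLt hP2 hU2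
end

section
/- Let H be a monic lower Hessenberg matrix of index -1 (H_{j,j+1} = 1, H_{j,k} = 0 for k > j+1). Define Y = H X̂ and Ĥ = X̂ Y⁻¹, where X̂ is the transpose of the shift matrix X. Then Y is lower triangular with unit diagonal (hence invertible), H Ĥ = I, and if P is the unique monic lower triangular matrix with H P = P X, then P X̂ = Ĥ P; i.e., the (k+1)-th column of P equals Ĥ times the k-th column of P. -/
open scoped BigOperators

/-!
Products of row-finite infinite matrices are finite sums and hence associative. The matrix
`Y = H X̂` has entries `Y i k = H i (k + 1)`, so it is lower triangular with unit diagonal and is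
inverted by forward substitution; then `H (X̂ Y⁻¹) = (H X̂) Y⁻¹ = I`. For `P`, the first row of
`Q = P X̂` vanishes, so `X̂ (X Q) = Q`, and `H Q = P X X̂ = P`. Hence `Y (X Q) = H Q = P`, i.e.
`X Q = Y⁻¹ P`, and `P X̂ = Q = X̂ Y⁻¹ P`.
-/

open Filter Finset

def LowerTriangular (A : ℕ → ℕ → ℂ) : Prop := ∀ i k : ℕ, k > i → A i k = 0

def RowFinite (A : ℕ → ℕ → ℂ) : Prop := ∀ i, ∀ᶠ j in atTop, A i j = 0

section MatMul

variable {A B : ℕ → ℕ → ℂ}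

lemma matMul_eq_sum_range {i n : ℕ} (h : ∀ j, n ≤ j → A i j = 0) (k : ℕ) :
    matMul A B i k = ∑ j ∈ range n, A i j * B j k :=
  tsum_eq_sum fun j hj => by rw [h j (by simpa using hj), zero_mul]

lemma LowerTriangular.matMul_eq_sum (hA : LowerTriangular A) (i k : ℕ) :
    matMul A B i k = ∑ j ∈ range (i + 1), A i j * B j k :=
  matMul_eq_sum_range (fun j hj => hA i j hj) k

lemma LowerTriangular.rowFinite (hA : LowerTriangular A) : RowFinite A :=
  fun i => eventually_atTop.2 ⟨i + 1, fun j hj => hA i j hj⟩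

theorem matMul_assoc_of_rowFinite (hA : RowFinite A) (hB : RowFinite B) (C : ℕ → ℕ → ℂ) :
    matMul (matMul A B) C = matMul A (matMul B C) := by
  funext i k
  obtain ⟨n, hn⟩ := eventually_atTop.1 (hA i)
  obtain ⟨m, hm⟩ := eventually_atTop.1 ((eventually_all_finset (range n)).2 fun l _ => hB l)
  have hAB : ∀ j, m ≤ j → matMul A B i j = 0 := fun j hj => by
    rw [matMul_eq_sum_range hn]
    exact sum_eq_zero fun l hl => by rw [hm j hj l hl, mul_zero]
  calc matMul (matMul A B) C i k
      = ∑ j ∈ range m, ∑ l ∈ range n, A i l * B l j * C j k := by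
        rw [matMul_eq_sum_range hAB]
        simp only [matMul_eq_sum_range hn, sum_mul]
    _ = ∑ l ∈ range n, A i l * matMul B C l k := by
        rw [sum_comm]
        refine sum_congr rfl fun l hl => ?_
        rw [matMul_eq_sum_range (fun j hj => hm j hj l hl), mul_sum]
        simp only [mul_assoc]
    _ = matMul A (matMul B C) i k := (matMul_eq_sum_range hn k).symm

end MatMul

section Entries

variable (A : ℕ → ℕ → ℂ)

lemma matMul_Imat : matMul A Imat = A := by
  funext i k
  rw [matMul, tsum_eq_single k fun j hj => by simp [Imat, hj]]
  simp [Imat]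

lemma Imat_matMul : matMul Imat A = A := by
  funext i k
  rw [matMul, tsum_eq_single i fun j hj => by simp [Imat, Ne.symm hj]]
  simp [Imat]

lemma matMul_XhatMat (i k : ℕ) : matMul A XhatMat i k = A i (k + 1) := by
  rw [matMul, tsum_eq_single (k + 1) fun j hj => by simp [XhatMat, hj]]
  simp [XhatMat]

lemma Xmat_matMul (i k : ℕ) : matMul Xmat A i k = A (i + 1) k := by
  rw [matMul, tsum_eq_single (i + 1) fun j hj => by simp [Xmat, hj]]
  simp [Xmat]

lemma XhatMat_matMul_zero (k : ℕ) : matMul XhatMat A 0 k = 0 := by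
  simp [matMul, XhatMat]

lemma XhatMat_matMul_succ (i k : ℕ) : matMul XhatMat A (i + 1) k = A i k := by
  rw [matMul, tsum_eq_single i fun j hj => by simp [XhatMat, Ne.symm hj]]
  simp [XhatMat]

lemma rowFinite_Xmat : RowFinite Xmat :=
  fun i => eventually_atTop.2 ⟨i + 2, fun j hj => by simp [Xmat]; omega⟩

lemma lowerTriangular_XhatMat : LowerTriangular XhatMat := fun i k hk => by simp [XhatMat]; omega

lemma Xmat_matMul_XhatMat : matMul Xmat XhatMat = Imat := by
  funext i k
  simp [Xmat_matMul, XhatMat, Imat]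

lemma XhatMat_matMul_Xmat_matMul {A : ℕ → ℕ → ℂ} (hA : ∀ k, A 0 k = 0) :
    matMul XhatMat (matMul Xmat A) = A := by
  funext i k
  cases i with
  | zero => rw [XhatMat_matMul_zero, hA]
  | succ i => rw [XhatMat_matMul_succ, Xmat_matMul]

end Entries

noncomputable def lowerInv (Y : ℕ → ℕ → ℂ) (i k : ℕ) : ℂ :=
  Imat i k - ∑ j : Fin i, Y i j * lowerInv Y j k

section LowerInv

variable {Y : ℕ → ℕ → ℂ}

lemma lowerInv_eq (Y : ℕ → ℕ → ℂ) (i k : ℕ) :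
    lowerInv Y i k = Imat i k - ∑ j ∈ range i, Y i j * lowerInv Y j k := by
  rw [lowerInv, Fin.sum_univ_eq_sum_range (fun j => Y i j * lowerInv Y j k)]

lemma lowerTriangular_lowerInv (Y : ℕ → ℕ → ℂ) : LowerTriangular (lowerInv Y) := by
  intro i k hk
  induction i using Nat.strong_induction_on with
  | _ i ih =>
    rw [lowerInv_eq, Imat, if_neg hk.ne, zero_sub, neg_eq_zero]
    exact sum_eq_zero fun j hj => by
      rw [ih j (mem_range.1 hj) (by have := mem_range.1 hj; omega), mul_zero]

lemma matMul_lowerInv (hY : LowerTriangular Y) (hY1 : ∀ i, Y i i = 1) :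
    matMul Y (lowerInv Y) = Imat := by
  funext i k
  rw [hY.matMul_eq_sum, sum_range_succ, hY1, one_mul, lowerInv_eq Y i k]
  ring

lemma lowerInv_self (Y : ℕ → ℕ → ℂ) (i : ℕ) : lowerInv Y i i = 1 := by
  rw [lowerInv_eq, sum_eq_zero fun j hj => by
    rw [lowerTriangular_lowerInv Y j i (mem_range.1 hj), mul_zero]]
  simp [Imat]

lemma lowerInv_matMul (hY : LowerTriangular Y) (hY1 : ∀ i, Y i i = 1) :
    matMul (lowerInv Y) Y = Imat := by
  -- the right inverse `W` of `lowerInv Y` is `Y`, since `Y = Y (lowerInv Y) W = W`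
  have hZW : matMul (lowerInv Y) (lowerInv (lowerInv Y)) = Imat :=
    matMul_lowerInv (lowerTriangular_lowerInv Y) (lowerInv_self Y)
  have hYW : Y = lowerInv (lowerInv Y) := calc
    Y = matMul Y (matMul (lowerInv Y) (lowerInv (lowerInv Y))) := by rw [hZW, matMul_Imat]
    _ = lowerInv (lowerInv Y) := by
      rw [← matMul_assoc_of_rowFinite hY.rowFinite (lowerTriangular_lowerInv Y).rowFinite,
        matMul_lowerInv hY hY1, Imat_matMul]
  rwa [← hYW] at hZW

end LowerInv

theorem stmt19 (H : ℕ → ℕ → ℂ)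
    (hH0 : ∀ j k : ℕ, k > j + 1 → H j k = 0)
    (hH1 : ∀ j : ℕ, H j (j + 1) = 1) :
    let Y := matMul H XhatMat
    (∀ i k : ℕ, k > i → Y i k = 0) ∧ (∀ i : ℕ, Y i i = 1) ∧
    ∃ Yinv : ℕ → ℕ → ℂ,
      (∀ i k : ℕ, k > i → Yinv i k = 0) ∧
      matMul Y Yinv = Imat ∧ matMul Yinv Y = Imat ∧
      matMul H (matMul XhatMat Yinv) = Imat ∧
      (∀ P : ℕ → ℕ → ℂ,
        (∀ i k : ℕ, k > i → P i k = 0) → (∀ i : ℕ, P i i = 1) →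
        matMul H P = matMul P Xmat →
        matMul P XhatMat = matMul (matMul XhatMat Yinv) P) := by
  intro Y
  have hHrow : RowFinite H := fun i => eventually_atTop.2 ⟨i + 2, fun j hj => hH0 i j hj⟩
  have hYlower : LowerTriangular Y := fun i k hk =>
    (matMul_XhatMat H i k).trans (hH0 i (k + 1) (by omega))
  have hY1 : ∀ i, Y i i = 1 := fun i => (matMul_XhatMat H i i).trans (hH1 i)
  have hYinvRow : RowFinite (lowerInv Y) := (lowerTriangular_lowerInv Y).rowFinite
  have hYYinv := matMul_lowerInv hYlower hY1
  have hYinvY := lowerInv_matMul hYlower hY1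
  have assocH := matMul_assoc_of_rowFinite hHrow lowerTriangular_XhatMat.rowFinite
  refine ⟨hYlower, hY1, lowerInv Y, lowerTriangular_lowerInv Y, hYYinv, hYinvY, ?_, ?_⟩
  · rw [← assocH, hYYinv]
  intro P hPlower _ hHP
  have hProw : RowFinite P := LowerTriangular.rowFinite hPlower
  have hPX0 : ∀ k, matMul P XhatMat 0 k = 0 := fun k => by
    rw [matMul_XhatMat]; exact hPlower 0 (k + 1) (by omega)
  have hHPX : matMul H (matMul P XhatMat) = P := by
    rw [← matMul_assoc_of_rowFinite hHrow hProw, hHP,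
      matMul_assoc_of_rowFinite hProw rowFinite_Xmat, Xmat_matMul_XhatMat, matMul_Imat]
  have hP : P = matMul Y (matMul Xmat (matMul P XhatMat)) := by
    rw [assocH, XhatMat_matMul_Xmat_matMul hPX0, hHPX]
  calc matMul P XhatMat = matMul XhatMat (matMul Xmat (matMul P XhatMat)) :=
        (XhatMat_matMul_Xmat_matMul hPX0).symm
    _ = matMul XhatMat (matMul (lowerInv Y) P) := by
        conv_rhs => rw [hP, ← matMul_assoc_of_rowFinite hYinvRow hYlower.rowFinite, hYinvY,
          Imat_matMul]
    _ = matMul (matMul XhatMat (lowerInv Y)) P :=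
        (matMul_assoc_of_rowFinite lowerTriangular_XhatMat.rowFinite hYinvRow P).symm
end
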